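/- arXiv:2003.00295 — 4 statements merged into one kernel-verified Lean document; each statement's English description precedes it below -/
import Mathlib

section
/- (One-step drift recursion) E‖X − η_l g − x‖² ≤ (1 + 1/(2K−1) + 6K η_l² L²) E‖X − x‖² + η_l² σ² + 6K η_l² ‖∇F_i(x) − ∇f(x)‖² + 6K η_l² ‖∇f(x)‖². -/
open MeasureTheory
open scoped RealInnerProductSpace

private lemma young_norm_sub' {E : Type*} [NormedAddCommGroup E] [InnerProductSpace ℝ E]
    (a b : E) {β : ℝ} (hβ : 0 < β) :
    ‖a - b‖ ^ 2 ≤ (1 + β) * ‖a‖ ^ 2 + (1 + β⁻¹) * ‖b‖ ^ 2 := by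
  have h1 : |⟪a, b⟫| ≤ ‖a‖ * ‖b‖ := abs_real_inner_le_norm a b
  have h2 : ‖a - b‖ ^ 2 = ‖a‖ ^ 2 - 2 * ⟪a, b⟫ + ‖b‖ ^ 2 := norm_sub_sq_real a b
  have h3 : β * β⁻¹ = 1 := mul_inv_cancel₀ hβ.ne'
  have h4 : 0 < β⁻¹ := inv_pos.2 hβ
  nlinarith [sq_nonneg (β * ‖a‖ - ‖b‖), abs_le.1 h1, sq_nonneg (‖a‖ - ‖b‖)]

private lemma norm_add3_sq_le' {E : Type*} [NormedAddCommGroup E] (u v w : E) :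
    ‖u + v + w‖ ^ 2 ≤ 3 * ‖u‖ ^ 2 + 3 * ‖v‖ ^ 2 + 3 * ‖w‖ ^ 2 := by
  have h : ‖u + v + w‖ ≤ ‖u‖ + ‖v‖ + ‖w‖ :=
    (norm_add_le _ _).trans (add_le_add_left (norm_add_le u v) _)
  nlinarith [norm_nonneg u, norm_nonneg v, norm_nonneg w, norm_nonneg (u + v + w),
    sq_nonneg (‖u‖ - ‖v‖), sq_nonneg (‖u‖ - ‖w‖), sq_nonneg (‖v‖ - ‖w‖)]

set_option maxHeartbeats 1000000 in
/-- One-step drift recursion. -/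
theorem one_step_drift_recursion
    {Ω : Type*} [mΩ : MeasurableSpace Ω] (μ : Measure Ω) [IsProbabilityMeasure μ]
    (d m : ℕ) (hd : 1 ≤ d) (hm : 1 ≤ m)
    (F : Fin m → EuclideanSpace ℝ (Fin d) → ℝ)
    (hFdiff : ∀ i, Differentiable ℝ (F i))
    (L : NNReal) (hFlip : ∀ i, LipschitzWith L (gradient (F i)))
    (f : EuclideanSpace ℝ (Fin d) → ℝ)
    (hf : ∀ y, f y = (1 / (m : ℝ)) * ∑ i, F i y)
    (i : Fin m) (K : ℕ) (hK : 2 ≤ K) (ηl : ℝ) (hηl : 0 < ηl)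
    (x : EuclideanSpace ℝ (Fin d)) (σ : ℝ) (hσ : 0 ≤ σ)
    (𝒢 : MeasurableSpace Ω) (h𝒢 : 𝒢 ≤ mΩ)
    (X g : Ω → EuclideanSpace ℝ (Fin d))
    (hX_meas : StronglyMeasurable[𝒢] X) (hX2 : MemLp X 2 μ) (hg2 : MemLp g 2 μ)
    (hunbiased : μ[g | 𝒢] =ᵐ[μ] fun ω => gradient (F i) (X ω))
    (hvar : ∫ ω, ‖g ω - gradient (F i) (X ω)‖ ^ 2 ∂μ ≤ σ ^ 2) :
    ∫ ω, ‖X ω - ηl • g ω - x‖ ^ 2 ∂μ ≤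
      (1 + 1 / (2 * (K : ℝ) - 1) + 6 * K * ηl ^ 2 * (L : ℝ) ^ 2) *
          ∫ ω, ‖X ω - x‖ ^ 2 ∂μ +
        ηl ^ 2 * σ ^ 2 +
        6 * K * ηl ^ 2 * ‖gradient (F i) x - gradient f x‖ ^ 2 +
        6 * K * ηl ^ 2 * ‖gradient f x‖ ^ 2 := by
  classical
  letI : MeasurableSpace Ω := mΩ
  haveI hσfin : SigmaFinite (μ.trim h𝒢) := inferInstance
  set G : Ω → EuclideanSpace ℝ (Fin d) := fun ω => gradient (F i) (X ω) with hGdef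
  set W : Ω → EuclideanSpace ℝ (Fin d) := fun ω => g ω - G ω with hWdef
  set Z : Ω → EuclideanSpace ℝ (Fin d) := fun ω => (X ω - x) - ηl • G ω with hZdef
  have hcont : Continuous (gradient (F i)) := (hFlip i).continuous
  -- Memℒp facts
  have hG2 : MemLp G 2 μ := by
    have hlip : LipschitzWith L (fun y => gradient (F i) y - gradient (F i) 0) := by
      intro a b
      simpa [edist_eq_enorm_sub, sub_sub_sub_cancel_right] using (hFlip i) a b
    have h1 : MemLp ((fun y => gradient (F i) y - gradient (F i) 0) ∘ X) 2 μ :=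
      hlip.comp_memLp (sub_self _) hX2
    have h2 := h1.add (memLp_const (gradient (F i) 0))
    have heq : G = ((fun y => gradient (F i) y - gradient (F i) 0) ∘ X)
        + fun _ => gradient (F i) 0 := by
      funext ω; simp [hGdef, Function.comp]
    rw [heq]; exact h2
  have hg1 : Integrable g μ := hg2.integrable one_le_two
  have hG1 : Integrable G μ := hG2.integrable one_le_two
  have hW2 : MemLp W 2 μ := hg2.sub hG2
  have hW1 : Integrable W μ := hW2.integrable one_le_two
  have hY2 : MemLp (fun ω => X ω - x) 2 μ := hX2.sub (memLp_const x)
  have hZ2 : MemLp Z 2 μ := hY2.sub (hG2.const_smul ηl)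
  have hG𝒢 : StronglyMeasurable[𝒢] G := hcont.comp_stronglyMeasurable hX_meas
  have hZ𝒢 : StronglyMeasurable[𝒢] Z :=
    (hX_meas.sub stronglyMeasurable_const).sub (hG𝒢.const_smul ηl)
  -- integrable squares
  have hZsq : Integrable (fun ω => ‖Z ω‖ ^ 2) μ := hZ2.norm.integrable_sq
  have hWsq : Integrable (fun ω => ‖W ω‖ ^ 2) μ := hW2.norm.integrable_sq
  have hYsq : Integrable (fun ω => ‖X ω - x‖ ^ 2) μ := hY2.norm.integrable_sq
  -- conditional expectation of W is 0
  have hcondW : μ[W|𝒢] =ᵐ[μ] 0 := by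
    have h1 : μ[W|𝒢] =ᵐ[μ] μ[g|𝒢] - μ[G|𝒢] := condExp_sub hg1 hG1 𝒢
    have h2 : μ[G|𝒢] = G := condExp_of_stronglyMeasurable h𝒢 hG𝒢 hG1
    filter_upwards [h1, hunbiased] with ω h1ω h2ω
    rw [h1ω, h2]
    simp only [Pi.sub_apply, Pi.zero_apply]
    rw [h2ω]
    simp [hGdef]
  -- coordinates of W
  have hcoord : ∀ j : Fin d, μ[(fun ω => W ω j)|𝒢] =ᵐ[μ] 0 := by
    intro j
    have hWj1 : Integrable (fun ω => W ω j) μ :=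
      ContinuousLinearMap.integrable_comp (EuclideanSpace.proj (𝕜 := ℝ) j) hW1
    refine (ae_eq_condExp_of_forall_setIntegral_eq h𝒢 hWj1
      (fun s _ _ => integrableOn_zero) (fun s hs hμs => ?_)
      stronglyMeasurable_const.aestronglyMeasurable).symm
    rw [integral_zero]
    have h1 : ∫ ω in s, W ω j ∂μ = (EuclideanSpace.proj (𝕜 := ℝ) j) (∫ ω in s, W ω ∂μ) :=
      ContinuousLinearMap.integral_comp_comm (EuclideanSpace.proj (𝕜 := ℝ) j) hW1.integrableOn
    have h2 : ∫ ω in s, W ω ∂μ = 0 := by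
      rw [← setIntegral_condExp h𝒢 hW1 hs, integral_congr_ae (ae_restrict_of_ae hcondW)]
      simp
    rw [h1, h2]
    simp
  -- coordinate products are integrable
  have hZjWj : ∀ j : Fin d, Integrable (fun ω => Z ω j * W ω j) μ := by
    intro j
    have hZj2 : MemLp (fun ω => Z ω j) 2 μ :=
      (EuclideanSpace.proj (𝕜 := ℝ) j).comp_memLp' hZ2
    have hWj2 : MemLp (fun ω => W ω j) 2 μ :=
      (EuclideanSpace.proj (𝕜 := ℝ) j).comp_memLp' hW2
    have := hWj2.smul (E := ℝ) (𝕜 := ℝ) hZj2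
      (p := 2) (q := 2) (r := 1)
    rw [memLp_one_iff_integrable] at this
    exact this
  -- cross term vanishes
  have hinner_eq : ∀ ω, ⟪Z ω, W ω⟫ = ∑ j, Z ω j * W ω j := by
    intro ω
    simp [PiLp.inner_apply, RCLike.inner_apply, conj_trivial, mul_comm]
  have hinner_int : Integrable (fun ω => ⟪Z ω, W ω⟫) μ := by
    have : (fun ω => ⟪Z ω, W ω⟫) = fun ω => ∑ j, Z ω j * W ω j := funext hinner_eq
    rw [this]
    exact integrable_finset_sum _ fun j _ => hZjWj j
  have hcross : ∫ ω, ⟪Z ω, W ω⟫ ∂μ = 0 := by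
    have : (fun ω => ⟪Z ω, W ω⟫) = fun ω => ∑ j, Z ω j * W ω j := funext hinner_eq
    rw [this, integral_finset_sum _ fun j _ => hZjWj j]
    refine Finset.sum_eq_zero fun j _ => ?_
    set Zj : Ω → ℝ := fun ω => EuclideanSpace.proj (𝕜 := ℝ) j (Z ω) with hZjdef
    set Wj : Ω → ℝ := fun ω => EuclideanSpace.proj (𝕜 := ℝ) j (W ω) with hWjdef
    have hZjWj' : Integrable (Zj * Wj) μ := hZjWj j
    have hZj𝒢 : StronglyMeasurable[𝒢] Zj :=
      (EuclideanSpace.proj (𝕜 := ℝ) j).continuous.comp_stronglyMeasurable hZ𝒢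
    have hWj1 : Integrable Wj μ :=
      ContinuousLinearMap.integrable_comp (EuclideanSpace.proj (𝕜 := ℝ) j) hW1
    have hWjcond : μ[Wj|𝒢] =ᵐ[μ] 0 := hcoord j
    have hpull : μ[Zj * Wj|𝒢] =ᵐ[μ] Zj * μ[Wj|𝒢] :=
      condExp_mul_of_stronglyMeasurable_left hZj𝒢 hZjWj' hWj1
    have hzero : (Zj * μ[Wj|𝒢]) =ᵐ[μ] 0 := by
      filter_upwards [hWjcond] with ω hω
      simp [hω]
    have hfin : ∫ ω, (Zj * Wj) ω ∂μ = 0 := by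
      rw [← integral_condExp h𝒢 (f := Zj * Wj), integral_congr_ae hpull,
        integral_congr_ae hzero]
      simp
    simpa [hZjdef, hWjdef] using hfin
  -- pointwise expansion
  have hpoint : (fun ω => ‖X ω - ηl • g ω - x‖ ^ 2)
      = fun ω => ‖Z ω‖ ^ 2 - 2 * ηl * ⟪Z ω, W ω⟫ + ηl ^ 2 * ‖W ω‖ ^ 2 := by
    funext ω
    have hid : X ω - ηl • g ω - x = Z ω - ηl • W ω := by
      simp only [hZdef, hWdef, smul_sub]
      abel
    rw [hid, norm_sub_sq_real, real_inner_smul_right, norm_smul, Real.norm_eq_abs,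
      mul_pow, sq_abs]
    ring
  have hsplit : ∫ ω, ‖X ω - ηl • g ω - x‖ ^ 2 ∂μ
      = ∫ ω, ‖Z ω‖ ^ 2 ∂μ + ηl ^ 2 * ∫ ω, ‖W ω‖ ^ 2 ∂μ := by
    have hIa : ∫ ω, (‖Z ω‖ ^ 2 - 2 * ηl * ⟪Z ω, W ω⟫ + ηl ^ 2 * ‖W ω‖ ^ 2) ∂μ
        = ∫ ω, (‖Z ω‖ ^ 2 - 2 * ηl * ⟪Z ω, W ω⟫) ∂μ + ∫ ω, ηl ^ 2 * ‖W ω‖ ^ 2 ∂μ :=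
      integral_add (hZsq.sub (hinner_int.const_mul _)) (hWsq.const_mul _)
    have hIb : ∫ ω, (‖Z ω‖ ^ 2 - 2 * ηl * ⟪Z ω, W ω⟫) ∂μ
        = ∫ ω, ‖Z ω‖ ^ 2 ∂μ - ∫ ω, 2 * ηl * ⟪Z ω, W ω⟫ ∂μ :=
      integral_sub hZsq (hinner_int.const_mul _)
    have hIc : ∫ ω, 2 * ηl * ⟪Z ω, W ω⟫ ∂μ = 0 := by
      rw [integral_const_mul, hcross, mul_zero]
    have hId : ∫ ω, ηl ^ 2 * ‖W ω‖ ^ 2 ∂μ = ηl ^ 2 * ∫ ω, ‖W ω‖ ^ 2 ∂μ :=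
      integral_const_mul _ _
    rw [hpoint, hIa, hIb, hIc, hId]
    ring
  -- pointwise bound on Z
  have hKR : (3:ℝ) ≤ 2 * (K:ℝ) - 1 := by
    have : (2:ℝ) ≤ (K:ℝ) := by exact_mod_cast hK
    linarith
  have hβpos : (0:ℝ) < 1 / (2 * (K:ℝ) - 1) := by positivity
  have hA : ∀ ω, ‖G ω‖ ^ 2 ≤ 3 * (L:ℝ) ^ 2 * ‖X ω - x‖ ^ 2
      + 3 * ‖gradient (F i) x - gradient f x‖ ^ 2 + 3 * ‖gradient f x‖ ^ 2 := by
    intro ω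
    have hdecomp : G ω = (G ω - gradient (F i) x) + (gradient (F i) x - gradient f x)
        + gradient f x := by abel
    have h3 := norm_add3_sq_le' (G ω - gradient (F i) x) (gradient (F i) x - gradient f x)
      (gradient f x)
    rw [← hdecomp] at h3
    have hlipb : ‖G ω - gradient (F i) x‖ ≤ (L:ℝ) * ‖X ω - x‖ := by
      simpa [hGdef, dist_eq_norm] using (hFlip i).dist_le_mul (X ω) x
    have h4 : ‖G ω - gradient (F i) x‖ ^ 2 ≤ ((L:ℝ) * ‖X ω - x‖) ^ 2 :=
      pow_le_pow_left₀ (norm_nonneg _) hlipb 2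
    nlinarith [norm_nonneg (G ω - gradient (F i) x)]
  have hZpt : ∀ ω, ‖Z ω‖ ^ 2 ≤
      (1 + 1 / (2 * (K : ℝ) - 1) + 6 * K * ηl ^ 2 * (L : ℝ) ^ 2) * ‖X ω - x‖ ^ 2
      + 6 * K * ηl ^ 2 * ‖gradient (F i) x - gradient f x‖ ^ 2
      + 6 * K * ηl ^ 2 * ‖gradient f x‖ ^ 2 := by
    intro ω
    have hy := young_norm_sub' (X ω - x) (ηl • G ω) hβpos
    have hinv : (1 / (2 * (K:ℝ) - 1))⁻¹ = 2 * (K:ℝ) - 1 := by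
      rw [one_div, inv_inv]
    rw [hinv] at hy
    have hZω : ‖Z ω‖ ^ 2 = ‖(X ω - x) - ηl • G ω‖ ^ 2 := by rw [hZdef]
    have hsm : ‖ηl • G ω‖ ^ 2 = ηl ^ 2 * ‖G ω‖ ^ 2 := by
      rw [norm_smul, Real.norm_eq_abs, mul_pow, sq_abs]
    rw [hsm] at hy
    have hGb := hA ω
    have hmul : 2 * (K:ℝ) * ηl ^ 2 * ‖G ω‖ ^ 2
        ≤ 2 * (K:ℝ) * ηl ^ 2 * (3 * (L:ℝ) ^ 2 * ‖X ω - x‖ ^ 2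
          + 3 * ‖gradient (F i) x - gradient f x‖ ^ 2 + 3 * ‖gradient f x‖ ^ 2) :=
      mul_le_mul_of_nonneg_left hGb (by positivity)
    rw [hZω]
    linarith [hy, hmul]
  -- integrate the bound on Z
  have hD : Integrable (fun ω =>
      (1 + 1 / (2 * (K : ℝ) - 1) + 6 * K * ηl ^ 2 * (L : ℝ) ^ 2) * ‖X ω - x‖ ^ 2
      + 6 * K * ηl ^ 2 * ‖gradient (F i) x - gradient f x‖ ^ 2
      + 6 * K * ηl ^ 2 * ‖gradient f x‖ ^ 2) μ :=
    ((hYsq.const_mul _).add (integrable_const _)).add (integrable_const _)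
  have hZint : ∫ ω, ‖Z ω‖ ^ 2 ∂μ ≤
      (1 + 1 / (2 * (K : ℝ) - 1) + 6 * K * ηl ^ 2 * (L : ℝ) ^ 2) *
        ∫ ω, ‖X ω - x‖ ^ 2 ∂μ
      + 6 * K * ηl ^ 2 * ‖gradient (F i) x - gradient f x‖ ^ 2
      + 6 * K * ηl ^ 2 * ‖gradient f x‖ ^ 2 := by
    have hmono := integral_mono hZsq hD hZpt
    have e1 : ∫ ω, ((1 + 1 / (2 * (K : ℝ) - 1) + 6 * K * ηl ^ 2 * (L : ℝ) ^ 2) * ‖X ω - x‖ ^ 2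
          + 6 * K * ηl ^ 2 * ‖gradient (F i) x - gradient f x‖ ^ 2
          + 6 * K * ηl ^ 2 * ‖gradient f x‖ ^ 2) ∂μ
        = ∫ ω, ((1 + 1 / (2 * (K : ℝ) - 1) + 6 * K * ηl ^ 2 * (L : ℝ) ^ 2) * ‖X ω - x‖ ^ 2
          + 6 * K * ηl ^ 2 * ‖gradient (F i) x - gradient f x‖ ^ 2) ∂μ
          + ∫ _ω : Ω, 6 * K * ηl ^ 2 * ‖gradient f x‖ ^ 2 ∂μ :=
      integral_add ((hYsq.const_mul _).add (integrable_const _)) (integrable_const _)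
    have e2 : ∫ ω, ((1 + 1 / (2 * (K : ℝ) - 1) + 6 * K * ηl ^ 2 * (L : ℝ) ^ 2) * ‖X ω - x‖ ^ 2
          + 6 * K * ηl ^ 2 * ‖gradient (F i) x - gradient f x‖ ^ 2) ∂μ
        = ∫ ω, (1 + 1 / (2 * (K : ℝ) - 1) + 6 * K * ηl ^ 2 * (L : ℝ) ^ 2) * ‖X ω - x‖ ^ 2 ∂μ
          + ∫ _ω : Ω, 6 * K * ηl ^ 2 * ‖gradient (F i) x - gradient f x‖ ^ 2 ∂μ :=
      integral_add (hYsq.const_mul _) (integrable_const _)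
    have e3 : ∫ ω, (1 + 1 / (2 * (K : ℝ) - 1) + 6 * K * ηl ^ 2 * (L : ℝ) ^ 2) * ‖X ω - x‖ ^ 2 ∂μ
        = (1 + 1 / (2 * (K : ℝ) - 1) + 6 * K * ηl ^ 2 * (L : ℝ) ^ 2) * ∫ ω, ‖X ω - x‖ ^ 2 ∂μ :=
      integral_const_mul _ _
    have e4 : ∫ _ω : Ω, 6 * (K:ℝ) * ηl ^ 2 * ‖gradient f x‖ ^ 2 ∂μ
        = 6 * (K:ℝ) * ηl ^ 2 * ‖gradient f x‖ ^ 2 := by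
      simp [measure_univ]
    have e5 : ∫ _ω : Ω, 6 * (K:ℝ) * ηl ^ 2 * ‖gradient (F i) x - gradient f x‖ ^ 2 ∂μ
        = 6 * (K:ℝ) * ηl ^ 2 * ‖gradient (F i) x - gradient f x‖ ^ 2 := by
      simp [measure_univ]
    rw [e1, e2, e3, e4, e5] at hmono
    linarith
  -- finish
  have hWvar : ηl ^ 2 * ∫ ω, ‖W ω‖ ^ 2 ∂μ ≤ ηl ^ 2 * σ ^ 2 :=
    mul_le_mul_of_nonneg_left hvar (sq_nonneg _)
  rw [hsplit]
  linarith
end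

section
/- (Deterministic part of the FedAdagrad variance lemma) If |Δ_{t,j}| ≤ B for all 0 ≤ t ≤ T−1 and 1 ≤ j ≤ d, then ∑_{t=0}^{T−1} ∑_{j=1}^d Δ_{t,j}² / (τ² + ∑_{l=0}^{t} Δ_{l,j}²) ≤ d + d·log(1 + B² T/τ²). -/
lemma aux_log_ratio (x y : ℝ) (hy : 0 < y) (hxy : y ≤ x) :
    (x - y) / x ≤ Real.log x - Real.log y := by
  have hx : 0 < x := lt_of_lt_of_le hy hxy
  have h := Real.log_le_sub_one_of_pos (show 0 < y / x from div_pos hy hx)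
  rw [Real.log_div hy.ne' hx.ne'] at h
  have hx' : (x - y) / x = 1 - y / x := by field_simp
  rw [hx']
  linarith

/-- Deterministic part of the FedAdagrad variance lemma. -/
theorem fedadagrad_variance_deterministic (T d : ℕ) (hT : 1 ≤ T) (hd : 1 ≤ d)
    (τ : ℝ) (hτ : 0 < τ) (B : ℝ) (hB : 0 ≤ B) (Δ : ℕ → Fin d → ℝ)
    (hΔ : ∀ t, t < T → ∀ j, |Δ t j| ≤ B) :
    ∑ t ∈ Finset.range T, ∑ j : Fin d,
        (Δ t j) ^ 2 / (τ ^ 2 + ∑ l ∈ Finset.range (t + 1), (Δ l j) ^ 2) ≤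
      (d : ℝ) + (d : ℝ) * Real.log (1 + B ^ 2 * T / τ ^ 2) := by
  have hτ2 : (0:ℝ) < τ ^ 2 := by positivity
  have hlog0 : 0 ≤ Real.log (1 + B ^ 2 * T / τ ^ 2) := by
    apply Real.log_nonneg
    have : (0:ℝ) ≤ B ^ 2 * T / τ ^ 2 := by positivity
    linarith
  rw [Finset.sum_comm]
  have key : ∀ j : Fin d,
      ∑ t ∈ Finset.range T, (Δ t j) ^ 2 / (τ ^ 2 + ∑ l ∈ Finset.range (t + 1), (Δ l j) ^ 2)
        ≤ Real.log (1 + B ^ 2 * T / τ ^ 2) := by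
    intro j
    set f : ℕ → ℝ := fun t => Real.log (τ ^ 2 + ∑ l ∈ Finset.range t, (Δ l j) ^ 2) with hf
    have hS : ∀ t : ℕ, 0 < τ ^ 2 + ∑ l ∈ Finset.range t, (Δ l j) ^ 2 := by
      intro t
      have : 0 ≤ ∑ l ∈ Finset.range t, (Δ l j) ^ 2 :=
        Finset.sum_nonneg fun l _ => sq_nonneg _
      linarith
    have step : ∀ t ∈ Finset.range T,
        (Δ t j) ^ 2 / (τ ^ 2 + ∑ l ∈ Finset.range (t + 1), (Δ l j) ^ 2) ≤ f (t + 1) - f t := by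
      intro t _
      have hle : τ ^ 2 + ∑ l ∈ Finset.range t, (Δ l j) ^ 2
          ≤ τ ^ 2 + ∑ l ∈ Finset.range (t + 1), (Δ l j) ^ 2 := by
        rw [Finset.sum_range_succ]
        nlinarith [sq_nonneg (Δ t j)]
      have h1 := aux_log_ratio (τ ^ 2 + ∑ l ∈ Finset.range (t + 1), (Δ l j) ^ 2)
        (τ ^ 2 + ∑ l ∈ Finset.range t, (Δ l j) ^ 2) (hS t) hle
      have hnum : (τ ^ 2 + ∑ l ∈ Finset.range (t + 1), (Δ l j) ^ 2)
          - (τ ^ 2 + ∑ l ∈ Finset.range t, (Δ l j) ^ 2) = (Δ t j) ^ 2 := by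
        rw [Finset.sum_range_succ]; ring
      rw [hnum] at h1
      exact h1
    calc ∑ t ∈ Finset.range T, (Δ t j) ^ 2 / (τ ^ 2 + ∑ l ∈ Finset.range (t + 1), (Δ l j) ^ 2)
        ≤ ∑ t ∈ Finset.range T, (f (t + 1) - f t) := Finset.sum_le_sum step
      _ = f T - f 0 := Finset.sum_range_sub f T
      _ ≤ Real.log (1 + B ^ 2 * T / τ ^ 2) := by
          have hf0 : f 0 = Real.log (τ ^ 2) := by simp [hf]
          have hST : ∑ l ∈ Finset.range T, (Δ l j) ^ 2 ≤ B ^ 2 * T := by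
            calc ∑ l ∈ Finset.range T, (Δ l j) ^ 2
                ≤ ∑ _l ∈ Finset.range T, B ^ 2 := by
                  apply Finset.sum_le_sum
                  intro l hl
                  have := hΔ l (Finset.mem_range.mp hl) j
                  nlinarith [abs_nonneg (Δ l j), sq_abs (Δ l j)]
              _ = B ^ 2 * T := by simp [mul_comm]
          have harg : (1 + B ^ 2 * T / τ ^ 2) = (τ ^ 2 + B ^ 2 * T) / τ ^ 2 := by
            field_simp
          rw [hf0, harg, Real.log_div (by positivity) hτ2.ne']
          have : f T ≤ Real.log (τ ^ 2 + B ^ 2 * T) := by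
            apply Real.log_le_log (hS T)
            linarith
          linarith
  calc ∑ j : Fin d, ∑ t ∈ Finset.range T,
        (Δ t j) ^ 2 / (τ ^ 2 + ∑ l ∈ Finset.range (t + 1), (Δ l j) ^ 2)
      ≤ ∑ _j : Fin d, Real.log (1 + B ^ 2 * T / τ ^ 2) :=
        Finset.sum_le_sum fun j _ => key j
    _ = (d : ℝ) * Real.log (1 + B ^ 2 * T / τ ^ 2) := by simp [mul_comm]
    _ ≤ (d : ℝ) + (d : ℝ) * Real.log (1 + B ^ 2 * T / τ ^ 2) := by
        have : (0:ℝ) ≤ d := Nat.cast_nonneg d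
        linarith
end

section
/- (FedAdam denominator-change bound) Let τ > 0, G ≥ 0, β₂ ∈ (0,1], and let g, Δ, v', v ∈ ℝ satisfy |g| ≤ G, v' ≥ 0, and v = β₂ v' + (1−β₂) Δ². Then g·Δ·(√(β₂ v') − √v) / ((√v + τ)(√(β₂ v') + τ)) ≤ √(1−β₂) · (G/τ) · Δ²/(√v + τ). -/
/-- FedAdam denominator-change bound. -/
theorem fedadam_denominator_change (τ G β₂ g Δ v' v : ℝ)
    (hτ : 0 < τ) (hG : 0 ≤ G) (hβ₂ : 0 < β₂) (hβ₂' : β₂ ≤ 1)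
    (hg : |g| ≤ G) (hv' : 0 ≤ v') (hv : v = β₂ * v' + (1 - β₂) * Δ ^ 2) :
    g * Δ * (Real.sqrt (β₂ * v') - Real.sqrt v) /
        ((Real.sqrt v + τ) * (Real.sqrt (β₂ * v') + τ)) ≤
      Real.sqrt (1 - β₂) * (G / τ) * (Δ ^ 2 / (Real.sqrt v + τ)) := by
  set a := Real.sqrt (β₂ * v') with ha
  set b := Real.sqrt v with hb
  have h1β : (0:ℝ) ≤ 1 - β₂ := by linarith
  have hva : 0 ≤ β₂ * v' := mul_nonneg hβ₂.le hv'
  have hvnn : 0 ≤ v := by nlinarith [sq_nonneg Δ]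
  have ha0 : 0 ≤ a := Real.sqrt_nonneg _
  have hb0 : 0 ≤ b := Real.sqrt_nonneg _
  have ha2 : a ^ 2 = β₂ * v' := Real.sq_sqrt hva
  have hb2 : b ^ 2 = v := Real.sq_sqrt hvnn
  set c := Real.sqrt (1 - β₂) * |Δ| with hc
  have hc0 : 0 ≤ c := mul_nonneg (Real.sqrt_nonneg _) (abs_nonneg _)
  have hc2 : c ^ 2 = (1 - β₂) * Δ ^ 2 := by
    rw [hc, mul_pow, Real.sq_sqrt h1β, sq_abs]
  have hab : b ≤ a + c := by
    rw [hb]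
    have hle : v ≤ (a + c) ^ 2 := by nlinarith [mul_nonneg ha0 hc0]
    calc Real.sqrt v ≤ Real.sqrt ((a + c) ^ 2) := Real.sqrt_le_sqrt hle
      _ = a + c := Real.sqrt_sq (by positivity)
  have hba : a ≤ b := by
    rw [ha, hb]
    exact Real.sqrt_le_sqrt (by nlinarith [sq_nonneg Δ])
  have habs : -(g * Δ) ≤ G * |Δ| := by
    calc -(g * Δ) ≤ |g * Δ| := neg_le_abs _
      _ = |g| * |Δ| := abs_mul _ _
      _ ≤ G * |Δ| := mul_le_mul_of_nonneg_right hg (abs_nonneg _)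
  have key : g * Δ * (a - b) * τ ≤ Real.sqrt (1 - β₂) * G * Δ ^ 2 * (a + τ) := by
    have h2 : g * Δ * (a - b) ≤ G * |Δ| * (b - a) := by nlinarith [habs, hba]
    have h3 : (b - a) * τ ≤ c * (a + τ) := by nlinarith [mul_nonneg hc0 ha0]
    have h4 : G * |Δ| * ((b - a) * τ) ≤ G * |Δ| * (c * (a + τ)) :=
      mul_le_mul_of_nonneg_left h3 (mul_nonneg hG (abs_nonneg _))
    have h5 : G * |Δ| * (c * (a + τ)) = Real.sqrt (1 - β₂) * G * Δ ^ 2 * (a + τ) := by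
      rw [hc, ← sq_abs Δ]; ring
    calc g * Δ * (a - b) * τ ≤ G * |Δ| * (b - a) * τ :=
          mul_le_mul_of_nonneg_right h2 hτ.le
      _ = G * |Δ| * ((b - a) * τ) := by ring
      _ ≤ G * |Δ| * (c * (a + τ)) := h4
      _ = Real.sqrt (1 - β₂) * G * Δ ^ 2 * (a + τ) := h5
  have hD : 0 < (b + τ) * (a + τ) := by positivity
  have hT : 0 < τ * (b + τ) := by positivity
  have hRHS : Real.sqrt (1 - β₂) * (G / τ) * (Δ ^ 2 / (b + τ))
      = (Real.sqrt (1 - β₂) * G * Δ ^ 2) / (τ * (b + τ)) := by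
    field_simp
  rw [hRHS, div_le_div_iff₀ hD hT]
  calc g * Δ * (a - b) * (τ * (b + τ)) = g * Δ * (a - b) * τ * (b + τ) := by ring
    _ ≤ Real.sqrt (1 - β₂) * G * Δ ^ 2 * (a + τ) * (b + τ) :=
        mul_le_mul_of_nonneg_right key (by positivity)
    _ = Real.sqrt (1 - β₂) * G * Δ ^ 2 * ((b + τ) * (a + τ)) := by ring
end

section
/- (Scalar AdaGrad telescoping-logarithm lemma) Let T ≥ 1 be an integer, τ > 0, and let a_0, …, a_{T−1} be nonnegative reals. Then ∑_{t=0}^{T−1} a_t / (τ² + ∑_{l=0}^{t} a_l) ≤ 1 + log(1 + (∑_{t=0}^{T−1} a_t)/τ²). -/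
open Finset

lemma adagrad_aux (τ : ℝ) (hτ : 0 < τ) (b : ℕ → ℝ) (hb : ∀ t, 0 ≤ b t) :
    ∀ T : ℕ, ∑ t ∈ Finset.range T, b t / (τ ^ 2 + ∑ l ∈ Finset.range (t + 1), b l) ≤
      Real.log ((τ ^ 2 + ∑ t ∈ Finset.range T, b t) / τ ^ 2) := by
  have hτ2 : 0 < τ ^ 2 := by positivity
  intro T
  induction T with
  | zero => simp [div_self hτ2.ne']
  | succ T ih =>
    have hsum : ∀ n : ℕ, 0 ≤ ∑ l ∈ Finset.range n, b l :=
      fun n => Finset.sum_nonneg fun i _ => hb i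
    have hS : 0 < τ ^ 2 + ∑ l ∈ Finset.range T, b l := by
      have := hsum T; linarith
    have hS' : 0 < τ ^ 2 + ∑ l ∈ Finset.range (T + 1), b l := by
      have := hsum (T + 1); linarith
    rw [Finset.sum_range_succ]
    have key : b T / (τ ^ 2 + ∑ l ∈ Finset.range (T + 1), b l) ≤
        Real.log ((τ ^ 2 + ∑ l ∈ Finset.range (T + 1), b l) / τ ^ 2) -
        Real.log ((τ ^ 2 + ∑ l ∈ Finset.range T, b l) / τ ^ 2) := by
      rw [Real.log_div (by positivity) (by positivity),
          Real.log_div (by positivity) (by positivity)]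
      have h1 : Real.log ((τ ^ 2 + ∑ l ∈ Finset.range T, b l) /
          (τ ^ 2 + ∑ l ∈ Finset.range (T + 1), b l)) ≤
          (τ ^ 2 + ∑ l ∈ Finset.range T, b l) /
          (τ ^ 2 + ∑ l ∈ Finset.range (T + 1), b l) - 1 :=
        Real.log_le_sub_one_of_pos (by positivity)
      rw [Real.log_div (by positivity) (by positivity)] at h1
      have hb' : (∑ l ∈ Finset.range (T + 1), b l) = (∑ l ∈ Finset.range T, b l) + b T :=
        Finset.sum_range_succ b T
      have : (τ ^ 2 + ∑ l ∈ Finset.range T, b l) /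
          (τ ^ 2 + ∑ l ∈ Finset.range (T + 1), b l) - 1 =
          - (b T / (τ ^ 2 + ∑ l ∈ Finset.range (T + 1), b l)) := by
        field_simp
        linarith [hb' ]
      linarith [h1, this ▸ h1]
    calc (∑ t ∈ Finset.range T, b t / (τ ^ 2 + ∑ l ∈ Finset.range (t + 1), b l)) +
          b T / (τ ^ 2 + ∑ l ∈ Finset.range (T + 1), b l)
        ≤ Real.log ((τ ^ 2 + ∑ t ∈ Finset.range T, b t) / τ ^ 2) +
          (Real.log ((τ ^ 2 + ∑ l ∈ Finset.range (T + 1), b l) / τ ^ 2) -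
           Real.log ((τ ^ 2 + ∑ l ∈ Finset.range T, b l) / τ ^ 2)) := by
          exact add_le_add ih key
      _ = Real.log ((τ ^ 2 + ∑ t ∈ Finset.range (T + 1), b t) / τ ^ 2) := by ring

/-- Scalar AdaGrad telescoping-logarithm lemma. -/
theorem adagrad_telescoping_log (T : ℕ) (hT : 1 ≤ T) (τ : ℝ) (hτ : 0 < τ)
    (a : ℕ → ℝ) (ha : ∀ t, t < T → 0 ≤ a t) :
    ∑ t ∈ Finset.range T, a t / (τ ^ 2 + ∑ l ∈ Finset.range (t + 1), a l) ≤
      1 + Real.log (1 + (∑ t ∈ Finset.range T, a t) / τ ^ 2) := by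
  set b : ℕ → ℝ := fun t => if t < T then a t else 0 with hbdef
  have hb : ∀ t, 0 ≤ b t := by
    intro t
    by_cases h : t < T <;> simp [hbdef, h, ha t]
  have hagree : ∀ n : ℕ, n ≤ T → ∑ l ∈ Finset.range n, b l = ∑ l ∈ Finset.range n, a l := by
    intro n hn
    apply Finset.sum_congr rfl
    intro i hi
    have : i < T := lt_of_lt_of_le (Finset.mem_range.mp hi) hn
    simp [hbdef, this]
  have hτ2 : 0 < τ ^ 2 := by positivity
  have h := adagrad_aux τ hτ b hb T
  have hLHS : ∑ t ∈ Finset.range T, a t / (τ ^ 2 + ∑ l ∈ Finset.range (t + 1), a l) =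
      ∑ t ∈ Finset.range T, b t / (τ ^ 2 + ∑ l ∈ Finset.range (t + 1), b l) := by
    apply Finset.sum_congr rfl
    intro t ht
    have ht' : t < T := Finset.mem_range.mp ht
    rw [hagree (t + 1) ht', show b t = a t from by simp [hbdef, ht']]
  rw [hLHS]
  rw [hagree T le_rfl] at h
  have harg : (τ ^ 2 + ∑ t ∈ Finset.range T, a t) / τ ^ 2 =
      1 + (∑ t ∈ Finset.range T, a t) / τ ^ 2 := by
    field_simp
  rw [harg] at h
  linarith
end
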